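/- For any string A, subsequence W of A, character c, and index 0 ≤ k ≤ |W|: the string W(0,k] ⊕ c ⊕ W(k,|W|] is a subsequence of A if c occurs in Middle(A,W,k). -/

import Mathlib

/-!
`A` splits as (shortest prefix containing `W(0,k]`) ⊕ `Middle A W k` ⊕ (shortest suffix
containing `W(k,|W|]`), so embedding the two halves of `W` into the outer pieces and `c` into
the middle embeds `W(0,k] ⊕ c ⊕ W(k,|W|]` into `A`.
-/

open List

/-- Length of the shortest prefix of `A` containing `W` as a subsequence. -/
noncomputable def minPrefixLen {α : Type*} (A W : List α) : ℕ :=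
  sInf {n | W <+ A.take n}

/-- Length of the shortest suffix of `A` containing `W` as a subsequence. -/
noncomputable def minSuffixLen {α : Type*} (A W : List α) : ℕ :=
  sInf {n | W <+ A.drop (A.length - n)}

/-- `Middle A W k`: what remains of `A` after deleting the shortest prefix containing
`W.take k` as a subsequence and the shortest suffix containing `W.drop k`. -/
noncomputable def Middle {α : Type*} (A W : List α) (k : ℕ) : List α :=
  (A.take (A.length - minSuffixLen A (W.drop k))).drop (minPrefixLen A (W.take k))

section

variable {α : Type*}

theorem List.cons_sublist_append_of_mem {c : α} {l r v : List α} (hc : c ∈ l) (hv : v <+ r) :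
    c :: v <+ l ++ r := by
  obtain ⟨l₁, l₂, rfl⟩ := List.mem_iff_append.mp hc
  simpa using
    ((hv.trans (sublist_append_right l₂ r)).cons_cons c).trans (sublist_append_right l₁ _)

theorem sublist_take_minPrefixLen {A W : List α} (h : W <+ A) : W <+ A.take (minPrefixLen A W) :=
  Nat.sInf_mem (s := {n | W <+ A.take n}) ⟨A.length, by simpa using h⟩

theorem sublist_drop_minSuffixLen {A W : List α} (h : W <+ A) :
    W <+ A.drop (A.length - minSuffixLen A W) :=
  Nat.sInf_mem (s := {n | W <+ A.drop (A.length - n)}) ⟨A.length, by simpa using h⟩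

theorem cons_sublist_drop_of_mem_drop_take {A v : List α} {c : α} {p m : ℕ}
    (hc : c ∈ (A.take m).drop p) (hv : v <+ A.drop m) : c :: v <+ A.drop p := by
  have hpm : p ≤ m := by
    by_contra! hmp
    simp [drop_eq_nil_of_le (show (A.take m).length ≤ p by grind [length_take])] at hc
  obtain ⟨n, rfl⟩ := Nat.exists_eq_add_of_le hpm
  rw [drop_take, Nat.add_sub_cancel_left] at hc
  rw [← A.drop_take_append_drop p n]
  exact cons_sublist_append_of_mem hc hv

end

theorem stmt16_general {α : Type*} (A W : List α) (hW : W <+ A) (c : α)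
    (k : ℕ) (hc : c ∈ Middle A W k) :
    W.take k ++ c :: W.drop k <+ A := by
  have hpre := sublist_take_minPrefixLen ((W.take_sublist k).trans hW)
  have hsuf := sublist_drop_minSuffixLen ((W.drop_sublist k).trans hW)
  calc W.take k ++ c :: W.drop k
      <+ A.take (minPrefixLen A (W.take k)) ++ A.drop (minPrefixLen A (W.take k)) :=
        hpre.append (cons_sublist_drop_of_mem_drop_take hc hsuf)
    _ = A := take_append_drop _ _

theorem stmt16 {α : Type*} (A W : List α) (hW : W <+ A) (c : α)
    (k : ℕ) (hk : k ≤ W.length) (hc : c ∈ Middle A W k) :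
    W.take k ++ c :: W.drop k <+ A :=
  stmt16_general A W hW c k hc
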